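/- Let N be an abelian group. Suppose that for every integer n ≥ 1 there are endomorphisms F_n, V_n : N → N such that: (i) F_n(V_n(x)) = n•x for all x ∈ N; and (ii) for every element x ∈ N of finite order there exists r(x) ∈ ℕ such that F_n(x) = 0 for all n ≥ r(x). Then for every finite subgroup H of N there is an injective group homomorphism from ⨁_ℕ H into N; moreover, if H is a direct summand of N, then there is a subgroup of N isomorphic to ⨁_ℕ H which is a direct summand of N. -/

import Mathlib

/-!
Choosing `n₀ < n₁ < ⋯` with `nᵢ ≡ 1 (mod |H|)` and growing fast enough, the torsion hypothesis
makes `F_{n_j} ∘ V_{n_i}` vanish on `H` for `i < j`, while `F_{n_i} ∘ V_{n_i}` is the identity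
on `H`. This triangularity already makes `c ↦ ∑ V_{n_i} (c i)` injective on `⨁_ℕ H`.

Given a retraction `ρ` onto `H`, the maps `gⱼ = ρ ∘ F_{n_j}` are triangular against the
`V_{n_i}`, and a Gram–Schmidt step turns this into a biorthogonal system `gⱼ ∘ uᵢ = δᵢⱼ`. Then
`x ↦ (gⱼ x)ⱼ` maps `N` to `∏_ℕ H` and restricts to the inclusion on the image `K` of `⨁_ℕ H`,
so it suffices that `⨁_ℕ H` is a direct summand of `∏_ℕ H`. For finite `H` this reduces to the
cyclic case, where `⨁_ℕ ZMod q` is an injective `ZMod q`-module: `ZMod q` is self-injective and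
an ideal of the finite ring `ZMod q` only sees finitely many coordinates.
-/

open Filter Function

theorem ZMod.baer_self (q : ℕ) [NeZero q] : Module.Baer (ZMod q) (ZMod q) := by
  intro I g
  let J : Ideal ℤ := I.comap (Int.castRingHom (ZMod q))
  set d := Submodule.IsPrincipal.generator J
  have mem_J (z : ℤ) : z ∈ J ↔ d ∣ z := by
    rw [← Ideal.mem_span_singleton, Ideal.span_singleton_generator]
  have hd : (d : ZMod q) ∈ I := (mem_J d).2 dvd_rfl
  obtain ⟨m, hm⟩ : d ∣ (q : ℤ) := (mem_J q).1 (by simp [J])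
  have hm0 : m ≠ 0 := by
    rintro rfl
    exact NeZero.ne q (by simpa using hm)
  set a := g ⟨d, hd⟩
  -- `a` is killed by the annihilator `(m)` of `d`, hence divisible by `d`
  have hma : (m : ZMod q) * a = 0 := by
    have : (m : ZMod q) • (⟨d, hd⟩ : I) = 0 := Subtype.ext (by
      simp only [smul_eq_mul, Submodule.coe_smul, Submodule.coe_zero]
      rw [← Int.cast_mul, mul_comm, ← hm]
      simp)
    rw [← smul_eq_mul, ← map_smul, this, map_zero]
  obtain ⟨b, hb⟩ : d ∣ (a.val : ℤ) := by
    have : ((m * a.val : ℤ) : ZMod q) = 0 := by simpa using hma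
    rw [ZMod.intCast_zmod_eq_zero_iff_dvd, hm, mul_comm d] at this
    exact Int.dvd_of_mul_dvd_mul_left hm0 this
  have ha : a = ((d * b : ℤ) : ZMod q) := by rw [← hb]; simp
  refine ⟨LinearMap.toSpanSingleton _ _ (b : ZMod q), fun x hx => ?_⟩
  obtain ⟨z, rfl⟩ := ZMod.intCast_surjective x
  obtain ⟨k, rfl⟩ := (mem_J z).1 hx
  have : (⟨((d * k : ℤ) : ZMod q), hx⟩ : I) = (k : ZMod q) • ⟨d, hd⟩ :=
    Subtype.ext (by simp [mul_comm])
  rw [this, map_smul, show g ⟨d, hd⟩ = a from rfl, ha]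
  simp only [LinearMap.toSpanSingleton_apply, smul_eq_mul]
  push_cast
  ring

theorem Module.Baer.finsupp {R Q : Type*} [Ring R] [Finite R] [AddCommGroup Q] [Module R Q]
    (hQ : Module.Baer R Q) (ι : Type*) : Module.Baer R (ι →₀ Q) := by
  classical
  intro I g
  have : Fintype I := Fintype.ofFinite I
  let S : Finset ι := Finset.univ.biUnion fun x : I => (g x).support
  choose g' hg' using fun i => hQ I ((Finsupp.lapply i).comp g)
  refine ⟨∑ i ∈ S, (Finsupp.lsingle i).comp (g' i), fun x hx => ?_⟩
  ext i
  by_cases hi : i ∈ S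
  · simp [Finsupp.finsetSum_apply, Finsupp.single_apply, hi, hg' i x hx]
  · have : i ∉ (g ⟨x, hx⟩).support := fun h => hi (Finset.mem_biUnion.2 ⟨_, Finset.mem_univ _, h⟩)
    simp [Finsupp.finsetSum_apply, Finsupp.single_apply, hi, Finsupp.notMem_support_iff.1 this]

theorem AddMonoidHom.compLeft_coe_finsupp {ι A B : Type*} [AddCommGroup A] [AddCommGroup B]
    (f : A →+ B) (c : ι →₀ A) : f.compLeft ι c = ⇑(Finsupp.mapRange.addMonoidHom f c) :=
  rfl

def HasFinsuppRetraction (ι H : Type*) [AddCommGroup H] : Prop :=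
  ∃ r : (ι → H) →+ (ι →₀ H), ∀ c : ι →₀ H, r c = c

namespace HasFinsuppRetraction

variable {ι : Type*}

theorem of_baer {R Q : Type*} [Ring R] [AddCommGroup Q] [Module R Q]
    (hQ : Module.Baer R (ι →₀ Q)) : HasFinsuppRetraction ι Q := by
  obtain ⟨r, hr⟩ := hQ.extension_property (Finsupp.lcoeFun (R := R)) DFunLike.coe_injective .id
  exact ⟨r.toAddMonoidHom, LinearMap.congr_fun hr⟩

theorem of_addEquiv {A B : Type*} [AddCommGroup A] [AddCommGroup B] (e : A ≃+ B)
    (hA : HasFinsuppRetraction ι A) : HasFinsuppRetraction ι B := by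
  obtain ⟨r, hr⟩ := hA
  refine ⟨(Finsupp.mapRange.addMonoidHom e.toAddMonoidHom).comp
    (r.comp (e.symm.toAddMonoidHom.compLeft ι)), fun c => ?_⟩
  ext i
  simp [AddMonoidHom.compLeft_coe_finsupp, hr]

theorem pi {κ : Type*} [Fintype κ] [DecidableEq κ] {A : κ → Type*} [∀ t, AddCommGroup (A t)]
    (hA : ∀ t, HasFinsuppRetraction ι (A t)) : HasFinsuppRetraction ι (∀ t, A t) := by
  choose r hr using hA
  refine ⟨∑ t, (Finsupp.mapRange.addMonoidHom (AddMonoidHom.single A t)).comp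
    ((r t).comp ((Pi.evalAddMonoidHom A t).compLeft ι)), fun c => ?_⟩
  ext i s
  simp [Finsupp.finsetSum_apply, AddMonoidHom.compLeft_coe_finsupp, hr, Finset.sum_apply]

theorem of_finite (H : Type*) [AddCommGroup H] [Finite H] : HasFinsuppRetraction ι H := by
  classical
  obtain ⟨κ, _, p, hp, e, ⟨φ⟩⟩ := AddCommGroup.equiv_directSum_zmod_of_finite H
  have (t : κ) : NeZero (p t ^ e t) := ⟨pow_ne_zero _ (hp t).ne_zero⟩
  exact of_addEquiv (φ.trans (DirectSum.linearEquivFunOnFintype ℤ κ _).toAddEquiv).symm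
    (pi fun t => of_baer ((ZMod.baer_self _).finsupp ι))

end HasFinsuppRetraction

def AddSubgroup.IsDirectSummand {N : Type*} [AddCommGroup N] (K : AddSubgroup N) : Prop :=
  ∃ ρ : N →+ N, (∀ x, ρ x ∈ K) ∧ ∀ a ∈ K, ρ a = a

section Biorthogonal

variable {ι H N : Type*} [AddCommGroup H] [AddCommGroup N]

theorem Finsupp.liftAddHom_injective_of_triangular {M : Type*} [AddCommGroup M] [LinearOrder ι]
    (u : ι → H →+ N) (g : ι → N →+ M) (hlt : ∀ i j, i < j → (g j).comp (u i) = 0)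
    (hdiag : ∀ i, Injective ((g i).comp (u i))) : Injective (Finsupp.liftAddHom u) := by
  rw [injective_iff_map_eq_zero]
  intro c hc
  by_contra hc0
  have hne : c.support.Nonempty := Finsupp.support_nonempty_iff.2 hc0
  set j := c.support.max' hne
  have hg : g j (Finsupp.liftAddHom u c) = g j (u j (c j)) := by
    rw [Finsupp.liftAddHom_apply, map_finsuppSum]
    refine Finset.sum_eq_single j (fun i hi hij => ?_) fun hj => (hj (c.support.max'_mem hne)).elim
    exact DFunLike.congr_fun (hlt i j (lt_of_le_of_ne (c.support.le_max' i hi) hij)) (c i)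
  rw [hc, map_zero, eq_comm] at hg
  exact Finsupp.mem_support_iff.1 (c.support.max'_mem hne)
    ((injective_iff_map_eq_zero _).1 (hdiag j) _ hg)

variable [DecidableEq ι] {u : ι → H →+ N} {g : ι → N →+ H}

theorem pi_liftAddHom_of_biorthogonal (hug : ∀ i j, (g j).comp (u i) = if i = j then .id H else 0)
    (c : ι →₀ H) : AddMonoidHom.pi g (Finsupp.liftAddHom u c) = ⇑c := by
  ext j
  have hug' (i : ι) (h : H) : g j (u i h) = if i = j then h else 0 := by
    rw [← AddMonoidHom.comp_apply, hug]
    split_ifs <;> rfl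
  simp [Finsupp.liftAddHom_apply, map_finsuppSum, hug']

theorem liftAddHom_injective_of_biorthogonal
    (hug : ∀ i j, (g j).comp (u i) = if i = j then .id H else 0) :
    Injective (Finsupp.liftAddHom u) := by
  have : AddMonoidHom.pi g ∘ Finsupp.liftAddHom u = ((⇑) : (ι →₀ H) → ι → H) :=
    funext (pi_liftAddHom_of_biorthogonal hug)
  exact .of_comp (this ▸ DFunLike.coe_injective)

theorem isDirectSummand_range_liftAddHom_of_biorthogonal
    (hug : ∀ i j, (g j).comp (u i) = if i = j then .id H else 0)
    (hH : HasFinsuppRetraction ι H) : (Finsupp.liftAddHom u).range.IsDirectSummand := by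
  obtain ⟨r, hr⟩ := hH
  refine ⟨(Finsupp.liftAddHom u).comp (r.comp (AddMonoidHom.pi g)), fun x => ⟨_, rfl⟩, ?_⟩
  rintro _ ⟨c, rfl⟩
  rw [AddMonoidHom.comp_apply, AddMonoidHom.comp_apply, pi_liftAddHom_of_biorthogonal hug, hr]

end Biorthogonal

section GramSchmidt

variable {H N : Type*} [AddCommGroup H] [AddCommGroup N] (u : ℕ → H →+ N) (g : ℕ → N →+ H)

/-- Unfolded, `biorthogonalProj u g i = id - ∑ k < i, biorthogonalize u g k ∘ g k`. -/
def biorthogonalProj : ℕ → N →+ N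
  | 0 => .id N
  | i + 1 =>
    biorthogonalProj i - (biorthogonalProj i).comp ((u i).comp ((g i).comp (biorthogonalProj i)))

def biorthogonalize (i : ℕ) : H →+ N := (biorthogonalProj u g i).comp (u i)

variable {u g}

theorem comp_biorthogonalProj (hlt : ∀ i j, i < j → (g j).comp (u i) = 0)
    (hdiag : ∀ i, (g i).comp (u i) = .id H) (i j : ℕ) :
    (g j).comp (biorthogonalProj u g i) = if j < i then 0 else g j := by
  induction i generalizing j with
  | zero => ext; simp [biorthogonalProj]
  | succ i ih =>
    have hgi : (g i).comp (biorthogonalProj u g i) = g i := by simpa using ih i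
    have expand : (g j).comp (biorthogonalProj u g (i + 1)) =
        (g j).comp (biorthogonalProj u g i) -
          ((g j).comp (biorthogonalProj u g i)).comp ((u i).comp (g i)) := by
      ext x
      simp [biorthogonalProj, hgi]
    rw [expand, ih j]
    rcases lt_trichotomy j i with hji | rfl | hij
    · simp [hji, Nat.lt_succ_of_lt hji]
    · ext x
      simp [← AddMonoidHom.comp_apply (g j) (u j), hdiag]
    · simp [hij.not_gt, (Nat.succ_le_of_lt hij).not_gt, ← AddMonoidHom.comp_assoc, hlt i j hij]

theorem comp_biorthogonalize (hlt : ∀ i j, i < j → (g j).comp (u i) = 0)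
    (hdiag : ∀ i, (g i).comp (u i) = .id H) (i j : ℕ) :
    (g j).comp (biorthogonalize u g i) = if i = j then .id H else 0 := by
  rw [biorthogonalize, ← AddMonoidHom.comp_assoc, comp_biorthogonalProj hlt hdiag]
  rcases lt_trichotomy j i with hji | rfl | hij
  · simp [hji, hji.ne']
  · simp [hdiag]
  · simp [hij.not_gt, hij.ne, hlt i j hij]

end GramSchmidt

theorem exists_seq_forall_lt_of_eventually {P : ℕ → ℕ → Prop}
    (h : ∀ m, ∀ᶠ k in atTop, P m k) : ∃ b : ℕ → ℕ, ∀ i j, i < j → P (b i) (b j) := by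
  choose R hR using fun m => eventually_atTop.1 (h m)
  let b : ℕ → ℕ := fun i => Nat.rec 0 (fun _ n => max n (R n)) i
  have hb_succ (i : ℕ) : b (i + 1) = max (b i) (R (b i)) := rfl
  have hb_mono : Monotone b :=
    monotone_nat_of_le_succ fun i => by rw [hb_succ]; exact le_max_left _ _
  refine ⟨b, fun i j hij => hR _ _ ?_⟩
  calc R (b i) ≤ b (i + 1) := by rw [hb_succ]; exact le_max_right _ _
    _ ≤ b j := hb_mono hij

theorem exists_frobenius_verschiebung_triangular {N : Type*} [AddCommGroup N]
    (F V : ℕ → N →+ N) (h1 : ∀ n : ℕ, 1 ≤ n → ∀ x : N, F n (V n x) = n • x)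
    (h2 : ∀ x : N, IsOfFinAddOrder x → ∃ r : ℕ, ∀ n : ℕ, r ≤ n → F n x = 0)
    (H : AddSubgroup N) [Finite H] :
    ∃ a : ℕ → ℕ, (∀ i, ∀ h ∈ H, F (a i) (V (a i) h) = h) ∧
      ∀ i j, i < j → ∀ h ∈ H, F (a j) (V (a i) h) = 0 := by
  set e := Nat.card H
  have he : 0 < e := Nat.card_pos
  have he_nsmul (h : N) (hh : h ∈ H) : e • h = 0 :=
    congrArg Subtype.val (card_nsmul_eq_zero' (x := (⟨h, hh⟩ : H)))
  have hvanish (m : ℕ) : ∀ᶠ k in atTop, ∀ h : H, F k (V m h) = 0 := by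
    refine eventually_all.2 fun h => eventually_atTop.2 (h2 _ ?_)
    exact isOfFinAddOrder_iff_nsmul_eq_zero.2
      ⟨e, he, by rw [← map_nsmul, he_nsmul _ h.2, map_zero]⟩
  have hlin : Tendsto (fun k => e * k + 1) atTop atTop :=
    tendsto_atTop_mono (fun k => show k ≤ e * k + 1 by nlinarith) tendsto_id
  obtain ⟨b, hb⟩ :=
    exists_seq_forall_lt_of_eventually fun m => hlin.eventually (hvanish (e * m + 1))
  refine ⟨fun i => e * b i + 1, fun i h hh => ?_, fun i j hij h hh => hb i j hij ⟨h, hh⟩⟩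
  rw [h1 _ (Nat.le_add_left 1 _), add_nsmul, mul_nsmul, he_nsmul h hh, smul_zero, zero_add,
    one_nsmul]

/-- **Proposition 6.1 (abstract form, Waldhausen A-theory Nil-terms).** If an abelian group
`N` carries, for every `n ≥ 1`, endomorphisms `F n, V n` with `Fₙ(Vₙ x) = n • x` for all `x`,
and for every element `x` of finite order there is `r(x)` with `Fₙ x = 0` for all `n ≥ r(x)`,
then every finite subgroup `H ≤ N` gives an embedding of `⨁_ℕ H` into `N`; moreover if `H` is
a direct summand of `N`, then some subgroup of `N` isomorphic to `⨁_ℕ H` is a direct summand. -/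
theorem a_theory_nil_infinite_sum
    (N : Type*) [AddCommGroup N]
    (F V : ℕ → N →+ N)
    (h1 : ∀ n : ℕ, 1 ≤ n → ∀ x : N, F n (V n x) = n • x)
    (h2 : ∀ x : N, IsOfFinAddOrder x → ∃ r : ℕ, ∀ n : ℕ, r ≤ n → F n x = 0) :
    ∀ H : AddSubgroup N, Finite H →
      (∃ f : (ℕ →₀ H) →+ N, Function.Injective f) ∧
      ((∃ ρ : N →+ N, (∀ x : N, ρ x ∈ H) ∧ ∀ h ∈ H, ρ h = h) →
        ∃ K : AddSubgroup N, Nonempty (K ≃+ (ℕ →₀ H)) ∧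
          ∃ σ : N →+ N, (∀ x : N, σ x ∈ K) ∧ ∀ a ∈ K, σ a = a) := by
  intro H _
  obtain ⟨a, hdiag, hlt⟩ := exists_frobenius_verschiebung_triangular F V h1 h2 H
  let u (i : ℕ) : H →+ N := (V (a i)).comp H.subtype
  refine ⟨⟨_, Finsupp.liftAddHom_injective_of_triangular u (fun j => F (a j))
    (fun i j hij => AddMonoidHom.ext fun h => hlt i j hij h h.2) fun i => ?_⟩, ?_⟩
  · have : (F (a i)).comp (u i) = H.subtype := AddMonoidHom.ext fun h => hdiag i h h.2
    exact this ▸ H.subtype_injective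
  rintro ⟨ρ, hρH, hρ⟩
  let g (j : ℕ) : N →+ H := (ρ.comp (F (a j))).codRestrict H fun x => hρH _
  have hug := comp_biorthogonalize (u := u) (g := g)
    (fun i j hij => AddMonoidHom.ext fun h => Subtype.ext <| by simp [g, u, hlt i j hij h h.2])
    (fun i => AddMonoidHom.ext fun h => Subtype.ext <| by simp [g, u, hdiag i h h.2, hρ h h.2])
  exact ⟨_, ⟨(AddMonoidHom.ofInjective (liftAddHom_injective_of_biorthogonal hug)).symm⟩,
    isDirectSummand_range_liftAddHom_of_biorthogonal hug (.of_finite H)⟩
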